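/- arXiv:2602.20448 — 3 statements merged into one kernel-verified Lean document; each statement's English description precedes it below -/
import Mathlib

section
/- (Proposition 1) Let η > 0 and ρ² > 0. If a random variable A satisfies A | a² = s ∼ N(0, ρ² s) and a² has the GIG(1, η, η) density proportional to exp(−(η/2)(s + 1/s)) on (0, ∞), then A has the hyperbolic density with shape η and scale ρ². Equivalently, for every x ∈ ℝ, ∫₀^∞ (2π ρ² s)^(−1/2) exp(−x²/(2 ρ² s)) · (2 K₁(η))^(−1) exp(−(η/2)(s + 1/s)) ds = (2 √(η ρ²) K₁(η))^(−1) exp(−√(η (η + x²/ρ²))). -/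
open MeasureTheory Real

/-- The modified Bessel function of the second kind of order `ν`, for `z > 0`. -/
noncomputable def besselK (ν z : ℝ) : ℝ :=
  ∫ t in Set.Ioi (0 : ℝ), Real.exp (-z * Real.cosh t) * Real.cosh (ν * t)

/-!
Up to constants, the mixture integral is `∫₀^∞ s^(-1/2) exp (-(a s + b / s) / 2) ds` with
`a = η`, `b = η + x² / ρ²`; the factor `K₁(η)` is only carried along. The substitution `s = t²`
and completing the square, `a t² + b / t² = (√a t - √b / t)² + 2 √(a b)`, reduce it to
`∫₀^∞ exp (-(t - c / t)²) dt`. By the Cauchy–Schlömilch substitution `u = t - c / t`, which maps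
`(0, ∞)` onto `ℝ`, this is half of the Gaussian integral `√π`.
-/

open Set

variable {E : Type*} [NormedAddCommGroup E] [NormedSpace ℝ E] {c : ℝ}

theorem image_sub_div_Ioi_eq_univ (hc : 0 < c) : (fun t : ℝ => t - c / t) '' Ioi 0 = univ := by
  refine eq_univ_of_forall fun y => ?_
  -- `t = (y + √(y² + 4c)) / 2` is the positive root of `t² - y t - c = 0`.
  set r := √(y ^ 2 + 4 * c)
  have hr : r ^ 2 = y ^ 2 + 4 * c := sq_sqrt (by positivity)
  have hyr : 0 < y + r := by
    have : |y| < r := by rw [← sqrt_sq_eq_abs]; exact sqrt_lt_sqrt (sq_nonneg y) (by linarith)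
    linarith [neg_abs_le y]
  refine ⟨(y + r) / 2, half_pos hyr, ?_⟩
  field_simp
  linear_combination hr

theorem hasDerivAt_sub_div {t : ℝ} (ht : t ≠ 0) :
    HasDerivAt (fun t : ℝ => t - c / t) (1 + c / t ^ 2) t := by
  have h : HasDerivAt (fun t : ℝ => t - c * t⁻¹) (1 - c * -(t ^ 2)⁻¹) t :=
    (hasDerivAt_id' t).sub ((hasDerivAt_inv ht).const_mul c)
  convert h using 1
  · simp only [div_eq_mul_inv]
  · ring

theorem strictMonoOn_sub_div (hc : 0 < c) : StrictMonoOn (fun t : ℝ => t - c / t) (Ioi 0) :=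
  fun _ ha _ _ hab => sub_lt_sub hab (div_lt_div_of_pos_left hc ha hab)

theorem integral_Ioi_one_add_div_sq_smul_comp_sub_div (hc : 0 < c) (g : ℝ → E) :
    ∫ t in Ioi 0, (1 + c / t ^ 2) • g (t - c / t) = ∫ x, g x := by
  have h := integral_image_eq_integral_abs_deriv_smul measurableSet_Ioi
    (fun t ht => (hasDerivAt_sub_div (c := c) (ne_of_gt ht)).hasDerivWithinAt)
    (strictMonoOn_sub_div hc).injOn g
  rw [image_sub_div_Ioi_eq_univ hc, Measure.restrict_univ] at h
  rw [h]
  refine setIntegral_congr_fun measurableSet_Ioi fun t _ => ?_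
  rw [abs_of_pos (by positivity)]

theorem integrableOn_Ioi_one_add_div_sq_smul_comp_sub_div_iff (hc : 0 < c) (g : ℝ → E) :
    IntegrableOn (fun t => (1 + c / t ^ 2) • g (t - c / t)) (Ioi 0) ↔ Integrable g := by
  have h := integrableOn_image_iff_integrableOn_abs_deriv_smul measurableSet_Ioi
    (fun t ht => (hasDerivAt_sub_div (c := c) (ne_of_gt ht)).hasDerivWithinAt)
    (strictMonoOn_sub_div hc).injOn g
  rw [image_sub_div_Ioi_eq_univ hc, integrableOn_univ] at h
  rw [h]
  refine integrableOn_congr_fun (fun t _ => ?_) measurableSet_Ioi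
  rw [abs_of_pos (by positivity)]

theorem hasDerivAt_const_div {t : ℝ} (ht : t ≠ 0) :
    HasDerivAt (fun t : ℝ => c / t) (-(c / t ^ 2)) t := by
  have h : HasDerivAt (fun t : ℝ => c * t⁻¹) (c * -(t ^ 2)⁻¹) t :=
    (hasDerivAt_inv ht).const_mul c
  convert h using 1
  · simp only [div_eq_mul_inv]
  · ring

theorem image_const_div_Ioi (hc : 0 < c) : (fun t : ℝ => c / t) '' Ioi 0 = Ioi 0 :=
  Subset.antisymm (image_subset_iff.2 fun _ ht => div_pos hc ht)
    fun y hy => ⟨c / y, div_pos hc hy, div_div_cancel₀ hc.ne'⟩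

theorem strictAntiOn_const_div (hc : 0 < c) : StrictAntiOn (fun t : ℝ => c / t) (Ioi 0) :=
  fun _ ha _ _ hab => div_lt_div_of_pos_left hc ha hab

theorem integral_Ioi_div_sq_smul_comp_const_div (hc : 0 < c) (g : ℝ → E) :
    ∫ t in Ioi 0, (c / t ^ 2) • g (c / t) = ∫ t in Ioi 0, g t := by
  have h := integral_image_eq_integral_abs_deriv_smul measurableSet_Ioi
    (fun t ht => (hasDerivAt_const_div (c := c) (ne_of_gt ht)).hasDerivWithinAt)
    (strictAntiOn_const_div hc).injOn g
  rw [image_const_div_Ioi hc] at h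
  rw [h]
  refine setIntegral_congr_fun measurableSet_Ioi fun t (ht : 0 < t) => ?_
  rw [abs_neg, abs_of_pos (by positivity)]

theorem integral_Ioi_comp_sub_div_of_even {f : ℝ → E} (hf : Integrable f)
    (heven : ∀ x, f (-x) = f x) (hc : 0 < c) :
    ∫ t in Ioi 0, f (t - c / t) = (2 : ℝ)⁻¹ • ∫ x, f x := by
  -- `t ↦ c / t` preserves `(0, ∞)` and negates `t - c / t`, so the two summands of
  -- `(1 + c / t²) • f (t - c / t)` have the same integral.
  set F : ℝ → E := fun t => f (t - c / t)
  have hF_inv : ∀ t ∈ Ioi (0 : ℝ), F (c / t) = F t := fun t (ht : 0 < t) => by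
    simp only [F]; rw [← heven]; congr 1; field_simp; ring
  have hsum : IntegrableOn (fun t => (1 + c / t ^ 2) • F t) (Ioi 0) :=
    (integrableOn_Ioi_one_add_div_sq_smul_comp_sub_div_iff hc f).2 hf
  have hF : IntegrableOn F (Ioi 0) := by
    refine IntegrableOn.congr_fun (hsum.bdd_smul 1 (φ := fun t => (1 + c / t ^ 2)⁻¹) ?_ ?_)
      (fun t (ht : 0 < t) => ?_) measurableSet_Ioi
    · exact (by fun_prop : Measurable fun t : ℝ => (1 + c / t ^ 2)⁻¹).aestronglyMeasurable
    · refine ae_restrict_of_forall_mem measurableSet_Ioi fun t _ => ?_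
      rw [norm_inv, norm_of_nonneg (by positivity)]
      exact inv_le_one_of_one_le₀ (le_add_of_nonneg_right (by positivity))
    · exact inv_smul_smul₀ (by positivity) (F t)
  have hF' : IntegrableOn (fun t => (c / t ^ 2) • F t) (Ioi 0) := by
    refine (hsum.sub hF).congr_fun (fun t _ => ?_) measurableSet_Ioi
    simp only [Pi.sub_apply, add_smul, one_smul, add_sub_cancel_left]
  have hhalf : ∫ t in Ioi 0, (c / t ^ 2) • F t = ∫ t in Ioi 0, F t := by
    rw [← integral_Ioi_div_sq_smul_comp_const_div hc F]
    exact setIntegral_congr_fun measurableSet_Ioi fun t ht => by rw [hF_inv t ht]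
  rw [← integral_Ioi_one_add_div_sq_smul_comp_sub_div hc f]
  simp only [add_smul, one_smul]
  rw [integral_add hF hF', hhalf, smul_add, ← add_smul]
  norm_num

theorem integral_Ioi_exp_neg_sq_sub_div (hc : 0 < c) :
    ∫ t in Ioi 0, exp (-(t - c / t) ^ 2) = √π / 2 := by
  have h := integral_Ioi_comp_sub_div_of_even (f := fun x => exp (-1 * x ^ 2))
    (integrable_exp_neg_mul_sq one_pos) (fun x => by simp only [neg_sq]) hc
  rw [integral_gaussian, div_one, smul_eq_mul, inv_mul_eq_div] at h
  simpa only [neg_one_mul] using h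

theorem integral_Ioi_exp_neg_mul_sq_add_div_sq {a b : ℝ} (ha : 0 < a) (hb : 0 < b) :
    ∫ t in Ioi 0, exp (-(a * t ^ 2 + b / t ^ 2) / 2) = √(2 * π / a) / 2 * exp (-√(a * b)) := by
  set m := √(a / 2)
  set c := √(a * b) / 2
  have hm : 0 < m := sqrt_pos.2 (half_pos ha)
  have hc : 0 < c := half_pos (sqrt_pos.2 (mul_pos ha hb))
  -- Completing the square: `(a t² + b / t²) / 2 = (m t - c / (m t))² + 2 c`.
  have hsq : ∀ t ∈ Ioi (0 : ℝ),
      exp (-(a * t ^ 2 + b / t ^ 2) / 2) = exp (-(m * t - c / (m * t)) ^ 2) * exp (-(2 * c)) :=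
    fun t (ht : 0 < t) => by
      have hm2 : m ^ 2 = a / 2 := sq_sqrt (half_pos ha).le
      have hab : √(a * b) ^ 2 = a * b := sq_sqrt (mul_pos ha hb).le
      rw [← exp_add]
      congr 1
      field_simp
      linear_combination (2 * t ^ 4 * m ^ 2 - b) * hm2 + hab / 2
  have hm_inv : m⁻¹ * √π = √(2 * π / a) := by
    rw [← sqrt_inv, ← sqrt_mul (inv_nonneg.2 (half_pos ha).le)]
    congr 1
    field_simp
  rw [setIntegral_congr_fun measurableSet_Ioi hsq, integral_mul_const,
    integral_comp_mul_left_Ioi (fun u => exp (-(u - c / u) ^ 2)) 0 hm, mul_zero,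
    integral_Ioi_exp_neg_sq_sub_div hc, smul_eq_mul, ← hm_inv,
    show 2 * c = √(a * b) by ring]
  ring

theorem integral_Ioi_rpow_neg_half_mul_exp_neg_add_div {a b : ℝ} (ha : 0 < a) (hb : 0 < b) :
    ∫ s in Ioi 0, s ^ (-(1 : ℝ) / 2) * exp (-(a * s + b / s) / 2)
      = √(2 * π / a) * exp (-√(a * b)) := by
  rw [← integral_comp_rpow_Ioi _ two_ne_zero]
  calc ∫ t in Ioi 0, (|(2 : ℝ)| * t ^ ((2 : ℝ) - 1)) •
          ((t ^ (2 : ℝ)) ^ (-(1 : ℝ) / 2) * exp (-(a * t ^ (2 : ℝ) + b / t ^ (2 : ℝ)) / 2))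
      = ∫ t in Ioi 0, 2 * exp (-(a * t ^ 2 + b / t ^ 2) / 2) := by
        refine setIntegral_congr_fun measurableSet_Ioi fun t (ht : 0 < t) => ?_
        rw [smul_eq_mul, ← rpow_mul ht.le, ← mul_assoc, mul_assoc |(2 : ℝ)|, ← rpow_add ht,
          rpow_two]
        norm_num
    _ = √(2 * π / a) * exp (-√(a * b)) := by
        rw [integral_const_mul, integral_Ioi_exp_neg_mul_sq_add_div_sq ha hb]
        ring

/-- Proposition 1: if `A | a² = s ∼ N(0, ρ² s)` and `a² ∼ GIG(1, η, η)`, then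
`A` has the hyperbolic density with shape `η` and scale `ρ²`. -/
theorem normal_gig_mixture_is_hyperbolic (η ρ2 x : ℝ) (hη : 0 < η) (hρ : 0 < ρ2) :
    ∫ s in Set.Ioi (0 : ℝ),
        (2 * π * ρ2 * s) ^ (-(1 : ℝ) / 2) * Real.exp (-x ^ 2 / (2 * ρ2 * s))
          * (2 * besselK 1 η)⁻¹ * Real.exp (-(η / 2) * (s + 1 / s))
      = (2 * Real.sqrt (η * ρ2) * besselK 1 η)⁻¹
          * Real.exp (-Real.sqrt (η * (η + x ^ 2 / ρ2))) := by
  set b := η + x ^ 2 / ρ2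
  have hb : 0 < b := by positivity
  have hfactor : ∀ s ∈ Ioi (0 : ℝ),
      (2 * π * ρ2 * s) ^ (-(1 : ℝ) / 2) * exp (-x ^ 2 / (2 * ρ2 * s))
          * (2 * besselK 1 η)⁻¹ * exp (-(η / 2) * (s + 1 / s))
        = ((2 * besselK 1 η)⁻¹ * (2 * π * ρ2) ^ (-(1 : ℝ) / 2))
            * (s ^ (-(1 : ℝ) / 2) * exp (-(η * s + b / s) / 2)) := fun s (hs : 0 < s) => by
    have hexp : exp (-x ^ 2 / (2 * ρ2 * s)) * exp (-(η / 2) * (s + 1 / s))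
        = exp (-(η * s + b / s) / 2) := by
      rw [← exp_add]; congr 1; simp only [b]; field_simp; ring
    rw [mul_rpow (by positivity) hs.le, ← hexp]
    ring
  have hconst : (2 * π * ρ2) ^ (-(1 : ℝ) / 2) * √(2 * π / η) = (√(η * ρ2))⁻¹ := by
    rw [neg_div, rpow_neg (by positivity), ← sqrt_eq_rpow, ← sqrt_inv, ← sqrt_inv,
      ← sqrt_mul (by positivity)]
    congr 1
    field_simp
  rw [setIntegral_congr_fun measurableSet_Ioi hfactor, integral_const_mul,
    integral_Ioi_rpow_neg_half_mul_exp_neg_add_div hη hb]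
  linear_combination (2 * besselK 1 η)⁻¹ * exp (-√(η * b)) * hconst
end

section
/- For every fixed ρ² > 0 and x ∈ ℝ, the hyperbolic density converges pointwise to the normal density as the shape parameter tends to infinity: lim_{η → ∞} (2 √(η ρ²) K₁(η))^(−1) exp(−√(η (η + x²/ρ²))) = (2π ρ²)^(−1/2) exp(−x²/(2 ρ²)). -/
open MeasureTheory Real Filter

/-!
Substituting `t = s / √η` gives
`√η exp η K_ν(η) = ∫₀^∞ exp (-η (cosh (s / √η) - 1)) cosh (ν s / √η) ds`.
Since `s² / 2 ≤ η (cosh (s / √η) - 1) ≤ (s² / 2) exp (s² / (2η))`,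
dominated convergence yields `√η exp η K_ν(η) → √(2π) / 2`. The hyperbolic density equals
`(2 √ρ²)⁻¹ (√η exp η K₁(η))⁻¹ exp (η - √(η (η + c)))` with `c = x² / ρ²`,
and `η - √(η (η + c)) → -c / 2`.
-/

open Set Topology
open scoped Nat

lemma one_add_sq_div_two_le_cosh (u : ℝ) : 1 + u ^ 2 / 2 ≤ cosh u := by
  have hterm (n : ℕ) : 0 ≤ u ^ (2 * n) / (2 * n)! := by
    rw [pow_mul]; positivity
  have h := sum_le_hasSum (Finset.range 2) (fun n _ => hterm n) (hasSum_cosh u)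
  norm_num [Finset.sum_range_succ] at h
  linarith

lemma sub_one_le_mul_exp (y : ℝ) : exp y - 1 ≤ y * exp y := by
  have h := mul_le_mul_of_nonneg_right (one_sub_le_exp_neg y) (exp_pos y).le
  rw [← exp_add, neg_add_cancel, exp_zero] at h
  linarith

lemma cosh_sub_one_le (u : ℝ) : cosh u - 1 ≤ u ^ 2 / 2 * exp (u ^ 2 / 2) := by
  linarith [cosh_le_exp_half_sq u, sub_one_le_mul_exp (u ^ 2 / 2)]

lemma mul_sq_div_sqrt {η : ℝ} (hη : 0 < η) (s : ℝ) : η * (s / √η) ^ 2 = s ^ 2 := by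
  rw [div_pow, sq_sqrt hη.le]
  field_simp

lemma sq_div_two_le_mul_cosh_div_sqrt_sub_one {η : ℝ} (hη : 0 < η) (s : ℝ) :
    s ^ 2 / 2 ≤ η * (cosh (s / √η) - 1) := by
  have h := mul_le_mul_of_nonneg_left (one_add_sq_div_two_le_cosh (s / √η)) hη.le
  nlinarith [mul_sq_div_sqrt hη s]

lemma mul_cosh_div_sqrt_sub_one_le {η : ℝ} (hη : 0 < η) (s : ℝ) :
    η * (cosh (s / √η) - 1) ≤ s ^ 2 / 2 * exp (s ^ 2 / (2 * η)) := by
  have h := mul_le_mul_of_nonneg_left (cosh_sub_one_le (s / √η)) hη.le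
  have hs := mul_sq_div_sqrt hη s
  have harg : (s / √η) ^ 2 / 2 = s ^ 2 / (2 * η) := by
    rw [← hs]; field_simp
  rw [harg] at h
  calc η * (cosh (s / √η) - 1) ≤ η * (s ^ 2 / (2 * η) * exp (s ^ 2 / (2 * η))) := h
    _ = s ^ 2 / 2 * exp (s ^ 2 / (2 * η)) := by field_simp

lemma tendsto_mul_cosh_div_sqrt_sub_one (s : ℝ) :
    Tendsto (fun η => η * (cosh (s / √η) - 1)) atTop (𝓝 (s ^ 2 / 2)) := by
  have hupper :
      Tendsto (fun η => s ^ 2 / 2 * exp (s ^ 2 / (2 * η))) atTop (𝓝 (s ^ 2 / 2)) := by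
    have h : Tendsto (fun η : ℝ => s ^ 2 / (2 * η)) atTop (𝓝 0) :=
      tendsto_const_nhds.div_atTop (tendsto_id.const_mul_atTop two_pos)
    simpa using ((continuous_exp.tendsto 0).comp h).const_mul (s ^ 2 / 2)
  refine tendsto_of_tendsto_of_tendsto_of_le_of_le' tendsto_const_nhds hupper ?_ ?_ <;>
    filter_upwards [eventually_gt_atTop 0] with η hη
  · exact sq_div_two_le_mul_cosh_div_sqrt_sub_one hη s
  · exact mul_cosh_div_sqrt_sub_one_le hη s

lemma exp_neg_sq_div_two_mul_cosh_eq (ν s : ℝ) :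
    exp (-(s ^ 2 / 2)) * cosh (ν * s) =
      exp (ν ^ 2 / 2) / 2 * (exp (-(1 / 2) * (s - ν) ^ 2) + exp (-(1 / 2) * (s + ν) ^ 2)) := by
  have hminus :
      exp (ν ^ 2 / 2) * exp (-(1 / 2) * (s - ν) ^ 2) = exp (-(s ^ 2 / 2)) * exp (ν * s) := by
    rw [← exp_add, ← exp_add]; ring_nf
  have hplus :
      exp (ν ^ 2 / 2) * exp (-(1 / 2) * (s + ν) ^ 2) = exp (-(s ^ 2 / 2)) * exp (-(ν * s)) := by
    rw [← exp_add, ← exp_add]; ring_nf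
  rw [cosh_eq]
  linear_combination (-(hminus + hplus)) / 2

lemma integrable_exp_neg_sq_div_two_mul_cosh (ν : ℝ) :
    Integrable (fun s => exp (-(s ^ 2 / 2)) * cosh (ν * s)) := by
  simp_rw [exp_neg_sq_div_two_mul_cosh_eq]
  have hg := integrable_exp_neg_mul_sq (by norm_num : (0 : ℝ) < 1 / 2)
  exact ((hg.comp_sub_right ν).add (hg.comp_add_right ν)).const_mul _

lemma sqrt_mul_exp_mul_besselK_eq (ν : ℝ) {η : ℝ} (hη : 0 < η) :
    √η * (exp η * besselK ν η) =
      ∫ s in Ioi 0, exp (-(η * (cosh (s / √η) - 1))) * cosh (ν * (s / √η)) := by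
  have hexp :
      exp η * besselK ν η = ∫ t in Ioi 0, exp (-(η * (cosh t - 1))) * cosh (ν * t) := by
    rw [besselK, ← integral_const_mul]
    congr with t
    rw [← mul_assoc, ← exp_add]
    ring_nf
  have hsubst := integral_comp_mul_left_Ioi
    (fun t => exp (-(η * (cosh t - 1))) * cosh (ν * t)) 0 (inv_pos.mpr (sqrt_pos.mpr hη))
  simp only [mul_zero, inv_mul_eq_div, smul_eq_mul, inv_inv] at hsubst
  rw [hexp, hsubst]

lemma exp_neg_mul_cosh_div_sqrt_sub_one_mul_cosh_le {η : ℝ} (hη : 1 ≤ η) (ν s : ℝ) :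
    exp (-(η * (cosh (s / √η) - 1))) * cosh (ν * (s / √η)) ≤
      exp (-(s ^ 2 / 2)) * cosh (ν * s) := by
  have hsqrt : 1 ≤ √η := one_le_sqrt.mpr hη
  gcongr ?_ * ?_
  · exact exp_le_exp.mpr (neg_le_neg (sq_div_two_le_mul_cosh_div_sqrt_sub_one (by linarith) s))
  · rw [cosh_le_cosh, abs_mul, abs_mul, abs_div, abs_of_pos (by linarith : 0 < √η)]
    gcongr
    exact div_le_self (abs_nonneg s) hsqrt

lemma tendsto_exp_neg_mul_cosh_div_sqrt_sub_one_mul_cosh (ν s : ℝ) :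
    Tendsto (fun η => exp (-(η * (cosh (s / √η) - 1))) * cosh (ν * (s / √η))) atTop
      (𝓝 (exp (-(s ^ 2 / 2)))) := by
  have hquot : Tendsto (fun η => s / √η) atTop (𝓝 0) :=
    tendsto_const_nhds.div_atTop tendsto_sqrt_atTop
  have hcosh := (continuous_cosh.tendsto 0).comp (by simpa using hquot.const_mul ν)
  have hexp := (continuous_exp.tendsto _).comp (tendsto_mul_cosh_div_sqrt_sub_one s).neg
  simpa using hexp.mul hcosh

lemma integral_exp_neg_sq_div_two_Ioi :
    ∫ s in Ioi (0 : ℝ), exp (-(s ^ 2 / 2)) = √(2 * π) / 2 := by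
  have h := integral_gaussian_Ioi (1 / 2)
  rw [div_div_eq_mul_div, div_one, mul_comm π] at h
  simpa [neg_div, div_eq_inv_mul] using h

theorem tendsto_sqrt_mul_exp_mul_besselK (ν : ℝ) :
    Tendsto (fun η => √η * (exp η * besselK ν η)) atTop (𝓝 (√(2 * π) / 2)) := by
  rw [← integral_exp_neg_sq_div_two_Ioi]
  have hlim := tendsto_integral_filter_of_dominated_convergence
    (μ := volume.restrict (Ioi 0)) (fun s => exp (-(s ^ 2 / 2)) * cosh (ν * s))
    (Eventually.of_forall fun η => by fun_prop)
    ((eventually_ge_atTop 1).mono fun η hη => ae_of_all _ fun s => by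
      rw [norm_of_nonneg (by positivity)]
      exact exp_neg_mul_cosh_div_sqrt_sub_one_mul_cosh_le hη ν s)
    (integrable_exp_neg_sq_div_two_mul_cosh ν).restrict
    (ae_of_all _ (tendsto_exp_neg_mul_cosh_div_sqrt_sub_one_mul_cosh ν))
  refine hlim.congr' ?_
  filter_upwards [eventually_gt_atTop 0] with η hη
  exact (sqrt_mul_exp_mul_besselK_eq ν hη).symm

lemma sub_sqrt_mul_add_eq {η c : ℝ} (hη : 0 < η) (hc : -c ≤ η) :
    η - √(η * (η + c)) = -c / (1 + √(1 + c / η)) := by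
  have hsq : √(η * (η + c)) = η * √(1 + c / η) := by
    rw [show η * (η + c) = η ^ 2 * (1 + c / η) by field_simp, sqrt_mul (sq_nonneg η),
      sqrt_sq hη.le]
  have hr : η * √(1 + c / η) ^ 2 = η + c := by
    rw [sq_sqrt (by rw [one_add_div hη.ne']; exact div_nonneg (by linarith) hη.le)]
    field_simp
  rw [hsq, eq_div_iff (by positivity)]
  linear_combination (-1) * hr

lemma tendsto_sub_sqrt_mul_add (c : ℝ) :
    Tendsto (fun η => η - √(η * (η + c))) atTop (𝓝 (-c / 2)) := by
  have hroot : Tendsto (fun η => 1 + √(1 + c / η)) atTop (𝓝 2) := by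
    have hquot : Tendsto (fun η : ℝ => 1 + c / η) atTop (𝓝 1) := by
      simpa using tendsto_const_nhds.add (tendsto_const_nhds.div_atTop (tendsto_id (α := ℝ)))
    have h := (continuous_sqrt.tendsto 1).comp hquot
    rw [sqrt_one] at h
    simpa [one_add_one_eq_two] using h.const_add 1
  refine (tendsto_const_nhds.div hroot two_ne_zero).congr' ?_
  filter_upwards [eventually_gt_atTop 0, eventually_ge_atTop (-c)] with η hη hc
  exact (sub_sqrt_mul_add_eq hη hc).symm

/-- Pointwise convergence of the hyperbolic density to the normal density as the
shape parameter tends to infinity. -/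
theorem hyperbolic_tendsto_normal (ρ2 x : ℝ) (hρ : 0 < ρ2) :
    Tendsto
      (fun η : ℝ => (2 * Real.sqrt (η * ρ2) * besselK 1 η)⁻¹
        * Real.exp (-Real.sqrt (η * (η + x ^ 2 / ρ2))))
      atTop
      (nhds ((2 * π * ρ2) ^ (-(1 : ℝ) / 2) * Real.exp (-x ^ 2 / (2 * ρ2)))) := by
  have hbessel := (tendsto_sqrt_mul_exp_mul_besselK 1).inv₀ (by positivity)
  have hexp := (continuous_exp.tendsto _).comp (tendsto_sub_sqrt_mul_add (x ^ 2 / ρ2))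
  have hlim := (hbessel.mul hexp).const_mul (2 * √ρ2)⁻¹
  have hconst : (2 * √ρ2)⁻¹ * ((√(2 * π) / 2)⁻¹ * exp (-(x ^ 2 / ρ2) / 2)) =
      (2 * π * ρ2) ^ (-(1 : ℝ) / 2) * exp (-x ^ 2 / (2 * ρ2)) := by
    rw [neg_div 2 (1 : ℝ), rpow_neg (by positivity), ← sqrt_eq_rpow,
      sqrt_mul (by positivity) ρ2]
    field_simp
  rw [← hconst]
  refine hlim.congr' ?_
  filter_upwards [eventually_gt_atTop 0] with η hη
  simp only [Function.comp_apply, sqrt_mul hη.le, mul_inv, exp_sub, exp_neg]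
  field_simp
end

section
/- For every fixed σ > 0 and x ∈ ℝ, the hyperbolic density with shape η and scale ρ² = η σ² converges pointwise to the Laplace density with scale σ as η tends to 0 from the right: lim_{η → 0⁺} (2 √(η · η σ²) K₁(η))^(−1) exp(−√(η (η + x²/(η σ²)))) = (2σ)^(−1) exp(−|x|/σ). -/
open MeasureTheory Real Filter

/-!
The substitution `v = η sinh t` turns `η K₁(η)` into `∫₀^∞ exp (-√(η² + v²)) dv`, which is
continuous in `η` by dominated convergence (with dominating function `exp (-v)`) and tends to
`∫₀^∞ exp (-v) dv = 1`. With `ρ² = η σ²` the hyperbolic density is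
`(2 σ · η K₁(η))⁻¹ exp (-√(η² + x²/σ²))`, whose limit is then the Laplace density.
-/

lemma image_const_mul_sinh_Ioi {c : ℝ} (hc : 0 < c) :
    (fun t => c * sinh t) '' Set.Ioi 0 = Set.Ioi 0 := by
  ext v
  constructor
  · rintro ⟨t, ht, rfl⟩
    exact mul_pos hc (sinh_pos_iff.mpr ht)
  · intro hv
    refine ⟨arsinh (v / c), arsinh_pos_iff.mpr (div_pos hv hc), ?_⟩
    simp only [sinh_arsinh, mul_div_cancel₀ v hc.ne']

lemma integral_Ioi_comp_const_mul_sinh {E : Type*} [NormedAddCommGroup E] [NormedSpace ℝ E]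
    {c : ℝ} (hc : 0 < c) (f : ℝ → E) :
    ∫ t in Set.Ioi 0, (c * cosh t) • f (c * sinh t) = ∫ v in Set.Ioi 0, f v := by
  have hderiv : ∀ t ∈ Set.Ioi (0 : ℝ),
      HasDerivWithinAt (fun t => c * sinh t) (c * cosh t) (Set.Ioi 0) t :=
    fun t _ => ((hasDerivAt_sinh t).const_mul c).hasDerivWithinAt
  have hinj : Set.InjOn (fun t => c * sinh t) (Set.Ioi 0) :=
    (sinh_strictMono.const_mul hc).injective.injOn
  have hsubst := integral_image_eq_integral_abs_deriv_smul measurableSet_Ioi hderiv hinj f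
  rw [image_const_mul_sinh_Ioi hc] at hsubst
  rw [hsubst]
  refine setIntegral_congr_fun measurableSet_Ioi fun t _ => ?_
  rw [abs_of_pos (mul_pos hc (cosh_pos t))]

lemma mul_besselK_one_eq_integral {η : ℝ} (hη : 0 < η) :
    η * besselK 1 η = ∫ v in Set.Ioi 0, exp (-√(η ^ 2 + v ^ 2)) := by
  rw [← integral_Ioi_comp_const_mul_sinh hη, besselK, ← integral_const_mul]
  refine setIntegral_congr_fun measurableSet_Ioi fun t _ => ?_
  have hsqrt : √(η ^ 2 + (η * sinh t) ^ 2) = η * cosh t := by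
    rw [← sqrt_sq (mul_pos hη (cosh_pos t)).le, mul_pow η (cosh t), cosh_sq']
    ring_nf
  rw [smul_eq_mul, hsqrt, one_mul, neg_mul]
  ring

lemma continuous_integral_Ioi_exp_neg_sqrt_sq_add_sq :
    Continuous fun η : ℝ => ∫ v in Set.Ioi 0, exp (-√(η ^ 2 + v ^ 2)) := by
  refine continuous_of_dominated (bound := fun v => exp (-v))
    (fun η => by fun_prop) (fun η => ?_) ?_ (ae_of_all _ fun v => by fun_prop)
  · filter_upwards [ae_restrict_mem measurableSet_Ioi] with v (hv : 0 < v)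
    rw [norm_of_nonneg (exp_pos _).le, exp_le_exp, neg_le_neg_iff]
    calc v = |v| := (abs_of_pos hv).symm
      _ ≤ √(η ^ 2 + v ^ 2) := abs_le_sqrt (by nlinarith)
  · simpa [IntegrableOn] using exp_neg_integrableOn_Ioi 0 one_pos

lemma tendsto_mul_besselK_one_nhdsGT_zero :
    Tendsto (fun η => η * besselK 1 η) (nhdsWithin 0 (Set.Ioi 0)) (nhds 1) := by
  have hlim := continuous_integral_Ioi_exp_neg_sqrt_sq_add_sq.continuousWithinAt
    (s := Set.Ioi 0) (x := 0)
  have hval : ∫ v in Set.Ioi (0 : ℝ), exp (-√((0 : ℝ) ^ 2 + v ^ 2)) = 1 := by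
    rw [← integral_exp_neg_Ioi_zero]
    refine setIntegral_congr_fun measurableSet_Ioi fun v (hv : 0 < v) => ?_
    rw [zero_pow two_ne_zero, zero_add, sqrt_sq hv.le]
  rw [ContinuousWithinAt, hval] at hlim
  refine hlim.congr' ?_
  filter_upwards [self_mem_nhdsWithin] with η (hη : 0 < η)
  exact (mul_besselK_one_eq_integral hη).symm

/-- Pointwise convergence of the hyperbolic density with shape `η` and scale
`ρ² = η σ²` to the Laplace density with scale `σ` as `η → 0⁺`. -/
theorem hyperbolic_tendsto_laplace (σ x : ℝ) (hσ : 0 < σ) :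
    Tendsto
      (fun η : ℝ => (2 * Real.sqrt (η * (η * σ ^ 2)) * besselK 1 η)⁻¹
        * Real.exp (-Real.sqrt (η * (η + x ^ 2 / (η * σ ^ 2)))))
      (nhdsWithin 0 (Set.Ioi 0))
      (nhds ((2 * σ)⁻¹ * Real.exp (-|x| / σ))) := by
  have hnorm : Tendsto (fun η => (2 * σ * (η * besselK 1 η))⁻¹) (nhdsWithin 0 (Set.Ioi 0))
      (nhds (2 * σ)⁻¹) := by
    simpa using (tendsto_mul_besselK_one_nhdsGT_zero.const_mul (2 * σ)).inv₀ (by positivity)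
  have hexp : Tendsto (fun η : ℝ => exp (-√(η ^ 2 + x ^ 2 / σ ^ 2))) (nhdsWithin 0 (Set.Ioi 0))
      (nhds (exp (-|x| / σ))) := by
    have hval : exp (-√((0 : ℝ) ^ 2 + x ^ 2 / σ ^ 2)) = exp (-|x| / σ) := by
      rw [zero_pow two_ne_zero, zero_add, sqrt_div (sq_nonneg x), sqrt_sq_eq_abs, sqrt_sq hσ.le,
        neg_div]
    exact hval ▸ (Continuous.tendsto (by fun_prop) 0).mono_left nhdsWithin_le_nhds
  refine (hnorm.mul hexp).congr' ?_
  filter_upwards [self_mem_nhdsWithin] with η (hη : 0 < η)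
  have hscale : √(η * (η * σ ^ 2)) = η * σ := by
    rw [← sqrt_sq (mul_pos hη hσ).le]
    ring_nf
  have hshape : η * (η + x ^ 2 / (η * σ ^ 2)) = η ^ 2 + x ^ 2 / σ ^ 2 := by
    field_simp
  rw [hscale, hshape]
  ring
end
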